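/- Let (b_k) be a sequence of reals with b_k ∈ [0, B], and define a_k = Σ_{i=1}^k b_i². Then Σ_{k=1}^N b_k²/√(a_k + ε) ≤ 2√(a_N + ε) for any ε > 0. -/

import Mathlib

/-!
Writing `s k = a k + ε`, the `k`-th summand is `(s k - s (k - 1)) / √(s k)`, and since
`√s + √t ≤ 2 √t` for `0 ≤ s ≤ t`, each such quotient is at most `2 (√(s k) - √(s (k - 1)))`.
The sum therefore telescopes to at most `2 (√(s N) - √ε) ≤ 2 √(s N)`.
-/

open Finset

lemma Real.sub_div_sqrt_le_two_mul_sqrt_sub_sqrt {s t : ℝ} (hs : 0 ≤ s) (hst : s ≤ t) :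
    (t - s) / √t ≤ 2 * (√t - √s) := by
  rcases (hs.trans hst).eq_or_lt with rfl | ht
  · simp [le_antisymm hst hs]
  have hsqrt_le : √s ≤ √t := Real.sqrt_le_sqrt hst
  have hsqrt_pos : 0 < √t := Real.sqrt_pos.mpr ht
  have hdiff : t - s = (√t - √s) * (√t + √s) := by
    ring_nf; rw [sq_sqrt hs, sq_sqrt ht.le]
  calc (t - s) / √t = (√t - √s) * ((√t + √s) / √t) := by rw [hdiff, mul_div_assoc]
    _ ≤ (√t - √s) * 2 := by
        gcongr
        rw [div_le_iff₀ hsqrt_pos]; linarith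
    _ = 2 * (√t - √s) := mul_comm _ _

lemma Monotone.sum_range_sub_div_sqrt_le {s : ℕ → ℝ} (hs : Monotone s) (hs₀ : 0 ≤ s 0) (N : ℕ) :
    ∑ k ∈ range N, (s (k + 1) - s k) / √(s (k + 1)) ≤ 2 * (√(s N) - √(s 0)) := by
  calc ∑ k ∈ range N, (s (k + 1) - s k) / √(s (k + 1))
      ≤ ∑ k ∈ range N, 2 * (√(s (k + 1)) - √(s k)) :=
        sum_le_sum fun k _ ↦ Real.sub_div_sqrt_le_two_mul_sqrt_sub_sqrt
          (hs₀.trans (hs k.zero_le)) (hs k.le_succ)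
    _ = 2 * (√(s N) - √(s 0)) := by rw [← mul_sum, sum_range_sub (fun k ↦ √(s k))]

theorem adagrad_sum_lemma_general (b : ℕ → ℝ) (a : ℕ → ℝ) (ε : ℝ) (N : ℕ)
    (ha : ∀ k, a k = ∑ i ∈ Finset.Icc 1 k, (b i) ^ 2)
    (hε : 0 < ε) :
    ∑ k ∈ Finset.Icc 1 N, (b k) ^ 2 / Real.sqrt (a k + ε)
      ≤ 2 * Real.sqrt (a N + ε) := by
  have ha₀ : a 0 = 0 := by simp [ha]
  have ha_succ : ∀ k, a (k + 1) = a k + b (k + 1) ^ 2 := fun k ↦ by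
    rw [ha, ha, sum_Icc_succ_top (by omega)]
  have hmono : Monotone (fun k ↦ a k + ε) := monotone_nat_of_le_succ fun k ↦ by
    simp only [ha_succ]; linarith [sq_nonneg (b (k + 1))]
  calc ∑ k ∈ Icc 1 N, b k ^ 2 / √(a k + ε)
      = ∑ k ∈ range N, b (k + 1) ^ 2 / √(a (k + 1) + ε) := by
        rw [range_eq_Ico, sum_Ico_add' (fun k ↦ b k ^ 2 / √(a k + ε)), Ico_add_one_right_eq_Icc]
    _ = ∑ k ∈ range N, ((a (k + 1) + ε) - (a k + ε)) / √(a (k + 1) + ε) :=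
        sum_congr rfl fun k _ ↦ by rw [ha_succ k]; ring
    _ ≤ 2 * (√(a N + ε) - √(a 0 + ε)) := hmono.sum_range_sub_div_sqrt_le (by simp [ha₀, hε.le]) N
    _ ≤ 2 * √(a N + ε) := by linarith [Real.sqrt_nonneg (a 0 + ε)]

/-- Key AdaGrad summation lemma: if `b_k ∈ [0, B]` and
`a_k = Σ_{i=1}^k b_i²`, then `Σ_{k=1}^N b_k²/√(a_k + ε) ≤ 2√(a_N + ε)`
for any `ε > 0`. -/
theorem adagrad_sum_lemma (b : ℕ → ℝ) (a : ℕ → ℝ) (B ε : ℝ) (N : ℕ)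
    (hb : ∀ k, b k ∈ Set.Icc 0 B)
    (ha : ∀ k, a k = ∑ i ∈ Finset.Icc 1 k, (b i) ^ 2)
    (hε : 0 < ε) :
    ∑ k ∈ Finset.Icc 1 N, (b k) ^ 2 / Real.sqrt (a k + ε)
      ≤ 2 * Real.sqrt (a N + ε) :=
  adagrad_sum_lemma_general b a ε N ha hε
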